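/- Let G be a finite insoluble group with soluble radical R(G). For every v ∈ G \ R(G), (1 + deg(v))/(1 + deg(vR(G))) = |R(G)|, where deg(v) is the degree of v in Γ_S(G) and deg(vR(G)) is the degree of vR(G) in Γ_S(G/R(G)). -/

import Mathlib

open Subgroup

/-- The soluble radical of a group: the join of all soluble normal subgroups. -/
def solRadical (G : Type*) [Group G] : Subgroup G :=
  sSup {N : Subgroup G | N.Normal ∧ IsSolvable N}

instance solRadical_normal {G : Type*} [Group G] : (solRadical G).Normal := by
  constructor
  intro n hn g
  have h : solRadical G ≤ (solRadical G).comap (MulAut.conj g).toMonoidHom := by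
    apply sSup_le
    rintro N ⟨hnorm, hsol⟩ x hx
    simp only [Subgroup.mem_comap, MulEquiv.coe_toMonoidHom, MulAut.conj_apply]
    exact le_sSup (s := {N : Subgroup G | N.Normal ∧ IsSolvable N}) ⟨hnorm, hsol⟩
      (hnorm.conj_mem x hx g)
  simpa using h hn

/-- The solubilizer of an element `x`: all `g` such that `⟨x, g⟩` is soluble. -/
def solubilizer {G : Type*} [Group G] (x : G) : Set G :=
  {g : G | IsSolvable (Subgroup.closure ({x, g} : Set G))}

/-- The solubility graph: vertices are elements outside the soluble radical,
two distinct vertices adjacent iff they generate a soluble subgroup. -/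
def solGraph (G : Type*) [Group G] : SimpleGraph {x : G // x ∉ solRadical G} where
  Adj a b := a ≠ b ∧ IsSolvable (Subgroup.closure ({a.1, b.1} : Set G))
  symm := ⟨by rintro a b ⟨hne, hs⟩; exact ⟨hne.symm, by rwa [Set.pair_comm]⟩⟩
  loopless := ⟨by rintro a ⟨h, -⟩; exact h rfl⟩

noncomputable instance {G : Type*} [Group G] [Fintype G] :
    Fintype {x : G // x ∉ solRadical G} := Fintype.ofFinite _

/-- The degree of `x` in the solubility graph (as the number of its neighbours). -/
noncomputable def solDeg (G : Type*) [Group G] (x : G) : ℕ :=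
  {g : G | g ∉ solRadical G ∧ g ≠ x ∧
    IsSolvable (Subgroup.closure ({x, g} : Set G))}.ncard

/-- The number of edges of the solubility graph. -/
noncomputable def solEdges (G : Type*) [Group G] : ℕ :=
  (solGraph G).edgeSet.ncard

/-- The solubility degree of a finite group. -/
noncomputable def Ps (G : Type*) [Group G] : ℚ :=
  (Nat.card {p : G × G // IsSolvable (Subgroup.closure ({p.1, p.2} : Set G))} : ℚ) /
    (Nat.card G : ℚ) ^ 2

/-!
Since `R(G)` is soluble, `⟨v, g⟩` is soluble iff its image `⟨vR, gR⟩` in `G/R(G)` is, so the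
solubilizer of `v` is the full preimage of the solubilizer of `vR`. As `R(G/R(G)) = 1`, this
preimage statement survives removing the radical on both sides, and a preimage under
`G → G/R(G)` has `|R(G)|` times as many elements. The `1 +` accounts for `v` itself, which is a
vertex of its own solubilizer but not one of its neighbours.
-/

section Solvable

variable {G : Type*} [Group G]

theorem Subgroup.isSolvable_of_le {H K : Subgroup G} (hHK : H ≤ K) [Group.IsSolvable K] :
    Group.IsSolvable H :=
  Group.isSolvable_of_isSolvable_injective (Subgroup.inclusion_injective hHK)

theorem Subgroup.isSolvable_map {G' : Type*} [Group G'] (f : G →* G') (H : Subgroup G)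
    [Group.IsSolvable H] : Group.IsSolvable (H.map f) :=
  Group.isSolvable_of_surjective (f.subgroupMap_surjective H)

theorem Subgroup.isSolvable_sup_of_normal (M N : Subgroup G) [N.Normal]
    [Group.IsSolvable M] [Group.IsSolvable N] : Group.IsSolvable (M ⊔ N : Subgroup G) := by
  have : Group.IsSolvable (N.subgroupOf (M ⊔ N)) :=
    Group.isSolvable_of_isSolvable_injective
      (f := (subgroupOfEquivOfLe (le_sup_right : N ≤ M ⊔ N)).toMonoidHom)
      (subgroupOfEquivOfLe _).injective
  have : Group.IsSolvable ((M ⊔ N : Subgroup G) ⧸ N.subgroupOf (M ⊔ N)) :=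
    Group.isSolvable_of_surjective
      (f := (QuotientGroup.quotientInfEquivProdNormalQuotient M N).toMonoidHom)
      (QuotientGroup.quotientInfEquivProdNormalQuotient M N).surjective
  exact (Group.isSolvable_iff_subgroup_quotient (N.subgroupOf (M ⊔ N))).2 ⟨‹_›, ‹_›⟩

theorem QuotientGroup.isSolvable_comap_mk' (N : Subgroup G) [N.Normal] [Group.IsSolvable N]
    (T : Subgroup (G ⧸ N)) [Group.IsSolvable T] : Group.IsSolvable (T.comap (mk' N)) := by
  have hNT : N ≤ T.comap (mk' N) := fun n hn ↦ by
    simp [(eq_one_iff n).2 hn]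
  refine Group.isSolvable_of_ker_le_range (inclusion hNT) ((mk' N).subgroupComap T) fun x hx ↦ ?_
  have hxN : (x : G) ∈ N := (eq_one_iff _).1 (congrArg Subtype.val hx)
  exact ⟨⟨x, hxN⟩, rfl⟩

theorem QuotientGroup.isSolvable_map_mk'_iff (N : Subgroup G) [N.Normal] [Group.IsSolvable N]
    (H : Subgroup G) : Group.IsSolvable (H.map (mk' N)) ↔ Group.IsSolvable H := by
  refine ⟨fun _ ↦ ?_, fun _ ↦ H.isSolvable_map _⟩
  have := isSolvable_comap_mk' N (H.map (mk' N))
  exact Subgroup.isSolvable_of_le (Subgroup.le_comap_map (mk' N) H)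

theorem QuotientGroup.isSolvable_closure_pair_mk_iff (N : Subgroup G) [N.Normal]
    [Group.IsSolvable N] (x y : G) :
    Group.IsSolvable (closure ({(x : G ⧸ N), (y : G ⧸ N)} : Set (G ⧸ N))) ↔
      Group.IsSolvable (closure ({x, y} : Set G)) := by
  rw [← isSolvable_map_mk'_iff N, MonoidHom.map_closure, Set.image_pair]
  rfl

end Solvable

section SolRadical

variable {G : Type*} [Group G]

theorem le_solRadical {N : Subgroup G} [N.Normal] [Group.IsSolvable N] : N ≤ solRadical G :=
  le_sSup ⟨‹_›, ‹_›⟩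

instance isSolvable_solRadical [Finite G] : Group.IsSolvable (solRadical G) := by
  have hsup : SupClosed {N : Subgroup G | N.Normal ∧ Group.IsSolvable N} := by
    rintro M ⟨_, _⟩ N ⟨_, _⟩
    exact ⟨sup_normal M N, M.isSolvable_sup_of_normal N⟩
  have hbot : (⊥ : Subgroup G) ∈ {N : Subgroup G | N.Normal ∧ Group.IsSolvable N} :=
    ⟨normal_bot, inferInstance⟩
  exact (hsup.sSup_mem (Set.toFinite _) hbot subset_rfl).2

theorem solRadical_quotient_solRadical [Finite G] : solRadical (G ⧸ solRadical G) = ⊥ := by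
  set T := solRadical (G ⧸ solRadical G)
  have : Group.IsSolvable (T.comap (QuotientGroup.mk' (solRadical G))) :=
    QuotientGroup.isSolvable_comap_mk' _ T
  have hle : T.comap (QuotientGroup.mk' (solRadical G)) ≤ solRadical G := le_solRadical
  rw [eq_bot_iff]
  rintro ⟨g⟩ hg
  exact (QuotientGroup.eq_one_iff g).2 (hle hg)

end SolRadical

theorem QuotientGroup.ncard_preimage_mk {G : Type*} [Group G] (N : Subgroup G)
    (T : Set (G ⧸ N)) : (mk ⁻¹' T : Set G).ncard = Nat.card N * T.ncard := by
  rw [← Nat.card_coe_set_eq, ← Nat.card_coe_set_eq,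
    Nat.card_congr (preimageMkEquivSubgroupProdSet N T), Nat.card_prod]

section SolDeg

variable {G : Type*} [Group G]

theorem mem_solubilizer_self (x : G) : x ∈ solubilizer x := by
  change Group.IsSolvable (closure {x, x})
  rw [Set.pair_eq_singleton, ← zpowers_eq_closure]
  exact Group.isSolvable_of_comm fun a b ↦ Std.Commutative.comm a b

theorem solDeg_add_one [Finite G] {x : G} (hx : x ∉ solRadical G) :
    solDeg G x + 1 = (solubilizer x \ solRadical G).ncard := by
  have hxS : x ∈ solubilizer x \ solRadical G := ⟨mem_solubilizer_self x, hx⟩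
  rw [solDeg, ← Set.ncard_sdiff_singleton_add_one hxS]
  congr 2
  ext g
  simp only [solubilizer, Set.mem_sdiff, Set.mem_ofPred_eq, SetLike.mem_coe,
    Set.mem_singleton_iff]
  tauto

theorem preimage_mk_solubilizer_sdiff_solRadical [Finite G] (x : G) :
    QuotientGroup.mk ⁻¹'
        (solubilizer (x : G ⧸ solRadical G) \ solRadical (G ⧸ solRadical G)) =
      solubilizer x \ solRadical G := by
  ext g
  simp only [solubilizer, Set.mem_preimage, Set.mem_sdiff, Set.mem_ofPred_eq, SetLike.mem_coe,
    solRadical_quotient_solRadical, mem_bot, QuotientGroup.eq_one_iff]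
  exact and_congr_left' (QuotientGroup.isSolvable_closure_pair_mk_iff _ x g)

theorem solDeg_add_one_eq_card_solRadical_mul [Finite G] {x : G} (hx : x ∉ solRadical G) :
    solDeg G x + 1 = Nat.card (solRadical G) * (solDeg (G ⧸ solRadical G) x + 1) := by
  have hxQ : (x : G ⧸ solRadical G) ∉ solRadical (G ⧸ solRadical G) := by
    rwa [solRadical_quotient_solRadical, mem_bot, QuotientGroup.eq_one_iff]
  rw [solDeg_add_one hx, solDeg_add_one hxQ, ← QuotientGroup.ncard_preimage_mk,
    preimage_mk_solubilizer_sdiff_solRadical]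

end SolDeg

theorem stmt7_general {G : Type*} [Group G] [Fintype G]
    (v : G) (hv : v ∉ solRadical G) :
    ((1 + solDeg G v : ℚ)) /
      (1 + solDeg (G ⧸ solRadical G) ((v : G ⧸ solRadical G)) : ℚ) =
      (Nat.card (solRadical G) : ℚ) := by
  rw [div_eq_iff (by positivity), add_comm, add_comm 1]
  exact_mod_cast solDeg_add_one_eq_card_solRadical_mul hv

theorem stmt7 {G : Type*} [Group G] [Fintype G] (hG : ¬ IsSolvable G)
    (v : G) (hv : v ∉ solRadical G) :
    ((1 + solDeg G v : ℚ)) /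
      (1 + solDeg (G ⧸ solRadical G) ((v : G ⧸ solRadical G)) : ℚ) =
      (Nat.card (solRadical G) : ℚ) :=
  stmt7_general v hv
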